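/- If D is an ultrafilter over a set I and the regular cardinal κ, with the order topology, is D-compact, then D is not (κ,κ)-regular. -/

import Mathlib

open Cardinal

/-- `X` is `[μ,λ]`-compact: every open cover by at most `lam` sets
has a subcover by fewer than `μ` sets. -/
def CptIn (μ lam : Cardinal) (X : Type) [TopologicalSpace X] : Prop :=
  ∀ 𝒰 : Set (Set X), (∀ U ∈ 𝒰, IsOpen U) → #𝒰 ≤ lam → ⋃₀ 𝒰 = Set.univ →
    ∃ 𝒱 ⊆ 𝒰, #𝒱 < μ ∧ ⋃₀ 𝒱 = Set.univ

/-- `p` is a `D`-limit point of the sequence `x`. -/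
def IsDLimit {I X : Type} [TopologicalSpace X] (D : Ultrafilter I) (x : I → X) (p : X) : Prop :=
  ∀ U : Set X, IsOpen U → p ∈ U → {i | x i ∈ U} ∈ D

/-- `X` is `D`-compact. -/
def DCompact {I : Type} (D : Ultrafilter I) (X : Type) [TopologicalSpace X] : Prop :=
  ∀ x : I → X, ∃ p : X, IsDLimit D x p

/-- `D` is `μ`-complete. -/
def MuComplete {I : Type} (μ : Cardinal) (D : Ultrafilter I) : Prop :=
  ∀ S : Set (Set I), #S < μ → (∀ A ∈ S, A ∈ D) → ⋂₀ S ∈ D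

/-- `D` is `(μ,lam)`-regular: there is a family of `lam`-many members of `D`
every intersection of `μ`-many of which is empty. -/
def RegUF {I : Type} (μ lam : Cardinal) (D : Ultrafilter I) : Prop :=
  ∃ (A : Type) (Z : A → Set I), #A = lam ∧ (∀ a, Z a ∈ D) ∧
    ∀ S : Set A, #S = μ → ⋂ a ∈ S, Z a = ∅

/-- The ordinal space of a cardinal, with the order topology. -/
noncomputable def ordSpace (c : Cardinal) : Type := c.ord.ToType

noncomputable instance (c : Cardinal) : LinearOrder (ordSpace c) :=
  inferInstanceAs (LinearOrder c.ord.ToType)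
noncomputable instance (c : Cardinal) : TopologicalSpace (ordSpace c) := Preorder.topology _
instance (c : Cardinal) : OrderTopology (ordSpace c) := ⟨rfl⟩

/-
Index a (κ,κ)-regular family of sets `W α ∈ D` by the ordinals `α < κ`. A point `i` lies in fewer than
κ of the sets `W α`, so by regularity of κ the indices `α` with `i ∈ W α` are bounded by some
`x i < κ`. If `p` were a `D`-limit of `x`, pick `q > p`: then `{i | x i < q}` and `W q` both lie
in `D`, yet an `i` in both has `q ≤ x i < q`.
-/

theorem bddAbove_of_mk_lt_cof {α : Type*} [LinearOrder α] {s : Set α} (hs : #s < Order.cof α) :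
    BddAbove s := by
  by_contra h
  exact (Order.cof_le (IsCofinal.of_not_bddAbove h)).not_gt hs

theorem mk_ordSpace (κ : Cardinal) : #(ordSpace κ) = κ := by
  rw [ordSpace, mk_toType, card_ord]

theorem cof_ordSpace {κ : Cardinal} (hκ : κ.IsRegular) : Order.cof (ordSpace κ) = κ :=
  (Ordinal.cof_toType κ.ord).trans hκ.cof_ord

theorem noMaxOrder_ordSpace {κ : Cardinal} (hκ : ℵ₀ ≤ κ) : NoMaxOrder (ordSpace κ) :=
  Cardinal.noMaxOrder hκ

theorem RegUF.exists_family {I X : Type} {μ lam : Cardinal} {D : Ultrafilter I}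
    (hD : RegUF μ lam D) (hX : #X = lam) :
    ∃ W : X → Set I, (∀ α, W α ∈ D) ∧ ∀ σ : Set X, #σ = μ → ⋂ α ∈ σ, W α = ∅ := by
  obtain ⟨A, Z, hA, hZD, hZ⟩ := hD
  obtain ⟨e⟩ : Nonempty (X ≃ A) := Cardinal.eq.mp (hX.trans hA.symm)
  refine ⟨Z ∘ e, fun α => hZD (e α), fun σ hσ => ?_⟩
  rw [← Set.subset_empty_iff, ← hZ (e '' σ) ((mk_image_eq e.injective).trans hσ)]
  simp only [Set.biInter_image, Function.comp_apply, subset_refl]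

theorem mk_setOf_mem_lt {I X : Type*} {μ : Cardinal} {W : X → Set I}
    (hW : ∀ σ : Set X, #σ = μ → ⋂ α ∈ σ, W α = ∅) (i : I) : #{α | i ∈ W α} < μ := by
  by_contra! hle
  obtain ⟨σ, hσ, hσμ⟩ := le_mk_iff_exists_subset.mp hle
  have hi : i ∈ ⋂ α ∈ σ, W α := Set.mem_iInter₂.mpr fun α hα => hσ hα
  rwa [hW σ hσμ] at hi

theorem DCompact.exists_not_bddAbove {I X : Type} {D : Ultrafilter I} [LinearOrder X]
    [NoMaxOrder X] [TopologicalSpace X] [ClosedIciTopology X] (h : DCompact D X)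
    (W : X → Set I) (hW : ∀ α, W α ∈ D) : ∃ i, ¬BddAbove {α | i ∈ W α} := by
  by_contra! hbdd
  choose x hx using hbdd
  obtain ⟨p, hp⟩ := h x
  obtain ⟨q, hpq⟩ := exists_gt p
  obtain ⟨i, hxq, hiq⟩ := D.nonempty_of_mem (Filter.inter_mem (hp _ isOpen_Iio hpq) (hW q))
  exact (hx i hiq).not_gt hxq

theorem stmt13 {I : Type} (D : Ultrafilter I) (κ : Cardinal) (hκ : κ.IsRegular)
    (h : DCompact D (ordSpace κ)) : ¬RegUF κ κ D := by
  intro hD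
  obtain ⟨W, hWD, hW⟩ := hD.exists_family (mk_ordSpace κ)
  have := noMaxOrder_ordSpace hκ.aleph0_le
  obtain ⟨i, hi⟩ := h.exists_not_bddAbove W hWD
  exact hi (bddAbove_of_mk_lt_cof ((mk_setOf_mem_lt hW i).trans_eq (cof_ordSpace hκ).symm))
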